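/- arXiv:2405.16721 — 4 statements merged into one kernel-verified Lean document; each statement's English description precedes it below -/
import Mathlib

section
/- Let n ≥ 1 and let W₁, W₂ : ℝⁿ → ℝ be C² functions that are uniformly strongly convex, i.e. there exists σ > 0 such that ⟨∇²Wᵢ(x)v, v⟩ ≥ σ|v|² for all x, v ∈ ℝⁿ and i = 1, 2. Assume that for every ξ ∈ ℝⁿ there exist x, y ∈ ℝⁿ with ξ = ∇W₁(x) = ∇W₂(y) and ∇²W₁(x) = ∇²W₂(y). Then there exist η ∈ ℝⁿ and b ∈ ℝ such that W₁(x) = W₂(x+η) + b for all x ∈ ℝⁿ. (Lemma 5.2.) -/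
/-!
Strong convexity makes each gradient map `∇Wᵢ` inverse-Lipschitz, hence injective, and each
Hessian a linear embedding. The hypothesis therefore defines a map `T` by
`∇W₂ (T x) = ∇W₁ x`, with `∇²W₁ x = ∇²W₂ (T x)`; it is continuous because `∇W₂` is
inverse-Lipschitz. As `∇²W₂ (T x)` is an embedding, the identity `∇W₂ ∘ T = ∇W₁`, whose two sides
have the same derivative at `x`, forces `T` to be differentiable at `x` with `T' x = id`. So `T`
is a translation `x ↦ x + η`, and `W₁` and `W₂ (· + η)` have the same gradient, hence differ by a
constant.
-/

open InnerProductSpace Topology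
open scoped NNReal RealInnerProductSpace

section StronglyMonotone

variable {E : Type*} [NormedAddCommGroup E] [InnerProductSpace ℝ E]

theorem mul_norm_sub_sq_le_inner_of_fderiv {f : E → E} (hf : Differentiable ℝ f) {σ : ℝ}
    (h : ∀ x v, σ * ‖v‖ ^ 2 ≤ ⟪fderiv ℝ f x v, v⟫) (x y : E) :
    σ * ‖x - y‖ ^ 2 ≤ ⟪f x - f y, x - y⟫ := by
  set v := x - y
  let g : ℝ → ℝ := fun t ↦ ⟪v, f (y + t • v)⟫
  have hg : ∀ t, HasDerivAt g ⟪v, fderiv ℝ f (y + t • v) v⟫ t := fun t ↦ by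
    have hline : HasDerivAt (fun t : ℝ ↦ y + t • v) v t := by
      simpa using ((hasDerivAt_id t).smul_const v).const_add y
    exact (innerSL ℝ v).hasFDerivAt.comp_hasDerivAt t
      ((hf _).hasFDerivAt.comp_hasDerivAt t hline)
  obtain ⟨t, -, ht⟩ := exists_hasDerivAt_eq_slope g _ zero_lt_one
    (fun t _ ↦ (hg t).continuousAt.continuousWithinAt) (fun t _ ↦ hg t)
  have hg01 : g 1 - g 0 = ⟪v, f x - f y⟫ := by simp [g, v, inner_sub_right]
  calc σ * ‖v‖ ^ 2 ≤ ⟪fderiv ℝ f (y + t • v) v, v⟫ := h _ v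
    _ = ⟪v, f x - f y⟫ := by rw [real_inner_comm, ht, hg01, sub_zero, div_one]
    _ = ⟪f x - f y, v⟫ := real_inner_comm _ _

theorem antilipschitzWith_of_mul_norm_sub_sq_le_inner {f : E → E} {c : ℝ≥0} (hc : 0 < c)
    (h : ∀ x y, c * ‖x - y‖ ^ 2 ≤ ⟪f x - f y, x - y⟫) : AntilipschitzWith c⁻¹ f := by
  refine AntilipschitzWith.of_le_mul_dist fun x y ↦ ?_
  rw [dist_eq_norm, dist_eq_norm, NNReal.coe_inv, inv_mul_eq_div,
    le_div_iff₀' (by exact_mod_cast hc)]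
  rcases (norm_nonneg (x - y)).eq_or_lt with hxy | hxy
  · rw [← hxy, mul_zero]; exact norm_nonneg _
  · refine le_of_mul_le_mul_right ?_ hxy
    calc c * ‖x - y‖ * ‖x - y‖ = c * ‖x - y‖ ^ 2 := by ring
      _ ≤ ⟪f x - f y, x - y⟫ := h x y
      _ ≤ ‖f x - f y‖ * ‖x - y‖ := real_inner_le_norm _ _

theorem ContinuousLinearMap.isEmbedding_of_mul_norm_sq_le_inner (A : E →L[ℝ] E) {c : ℝ≥0}
    (hc : 0 < c) (h : ∀ v, c * ‖v‖ ^ 2 ≤ ⟪A v, v⟫) : IsEmbedding A :=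
  (antilipschitzWith_of_mul_norm_sub_sq_le_inner hc fun x y ↦
    map_sub A x y ▸ h (x - y)).isEmbedding A.continuous

end StronglyMonotone

theorem hasFDerivAt_id_of_comp_eq {𝕜 E F : Type*} [NontriviallyNormedField 𝕜]
    [NormedAddCommGroup E] [NormedSpace 𝕜 E] [NormedAddCommGroup F] [NormedSpace 𝕜 F]
    {G₁ G₂ : E → F} {T : E → E} {A : E →L[𝕜] F} {x : E} (hT : ContinuousAt T x)
    (hcomp : G₂ ∘ T = G₁) (hG₁ : HasFDerivAt G₁ A x) (hG₂ : HasFDerivAt G₂ A (T x))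
    (hA : IsEmbedding A) : HasFDerivAt T (ContinuousLinearMap.id 𝕜 E) x :=
  hG₂.of_comp_of_isEmbedding hT hA (by simpa using hG₁) (.of_eq hcomp)

theorem exists_eq_add_of_hasFDerivAt_id {E : Type*} [NormedAddCommGroup E] [NormedSpace ℝ E]
    {T : E → E} (hT : ∀ x, HasFDerivAt T (ContinuousLinearMap.id ℝ E) x) :
    ∃ η, ∀ x, T x = x + η := by
  obtain ⟨η, hη⟩ := isOpen_univ.exists_eq_add_of_fderiv_eq isPreconnected_univ
    (fun x _ ↦ (hT x).differentiableAt.differentiableWithinAt) differentiableOn_id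
    (fun x _ ↦ by simp [(hT x).fderiv])
  exact ⟨η, fun x ↦ hη (Set.mem_univ x)⟩

section Gradient

variable {E : Type*} [NormedAddCommGroup E] [InnerProductSpace ℝ E] [CompleteSpace E]

theorem ContDiff.gradient {W : E → ℝ} {k : ℕ} (h : ContDiff ℝ (k + 1) W) :
    ContDiff ℝ k (gradient W) :=
  (toDual ℝ E).symm.contDiff.comp (h.fderiv_right le_rfl)

theorem exists_eq_comp_add_add_of_gradient_eq {W₁ W₂ : E → ℝ} (hW₁ : Differentiable ℝ W₁)
    (hW₂ : Differentiable ℝ W₂) {η : E} (h : ∀ x, gradient W₂ (x + η) = gradient W₁ x) :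
    ∃ b, ∀ x, W₁ x = W₂ (x + η) + b := by
  obtain ⟨b, hb⟩ := isOpen_univ.exists_eq_add_of_fderiv_eq (g := fun x ↦ W₂ (x + η))
    isPreconnected_univ hW₁.differentiableOn
    (hW₂.comp (differentiable_id.add_const η)).differentiableOn
    (fun x _ ↦ by rw [fderiv_comp_add_right, ← toDual_gradient, ← toDual_gradient, h])
  exact ⟨b, fun x ↦ hb (Set.mem_univ x)⟩

end Gradient

theorem strongly_convex_hessian_rigidity_general
    (n : ℕ)
    (W₁ W₂ : EuclideanSpace ℝ (Fin n) → ℝ)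
    (hW₁ : ContDiff ℝ 2 W₁) (hW₂ : ContDiff ℝ 2 W₂)
    (σ : ℝ) (hσ : 0 < σ)
    (hconv₁ : ∀ x v : EuclideanSpace ℝ (Fin n),
      σ * ‖v‖ ^ 2 ≤ (inner ℝ (fderiv ℝ (gradient W₁) x v) v : ℝ))
    (hconv₂ : ∀ x v : EuclideanSpace ℝ (Fin n),
      σ * ‖v‖ ^ 2 ≤ (inner ℝ (fderiv ℝ (gradient W₂) x v) v : ℝ))
    (hsurj : ∀ ξ : EuclideanSpace ℝ (Fin n), ∃ x y : EuclideanSpace ℝ (Fin n),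
      gradient W₁ x = ξ ∧ gradient W₂ y = ξ ∧
      fderiv ℝ (gradient W₁) x = fderiv ℝ (gradient W₂) y) :
    ∃ (η : EuclideanSpace ℝ (Fin n)) (b : ℝ), ∀ x, W₁ x = W₂ (x + η) + b := by
  lift σ to ℝ≥0 using hσ.le
  replace hσ : 0 < σ := mod_cast hσ
  have hG₁ : Differentiable ℝ (gradient W₁) := hW₁.gradient.differentiable one_ne_zero
  have hG₂ : Differentiable ℝ (gradient W₂) := hW₂.gradient.differentiable one_ne_zero
  have anti₁ := antilipschitzWith_of_mul_norm_sub_sq_le_inner hσ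
    (mul_norm_sub_sq_le_inner_of_fderiv hG₁ hconv₁)
  have anti₂ := antilipschitzWith_of_mul_norm_sub_sq_le_inner hσ
    (mul_norm_sub_sq_le_inner_of_fderiv hG₂ hconv₂)
  have hpartner : ∀ x, ∃ y, gradient W₂ y = gradient W₁ x ∧
      fderiv ℝ (gradient W₁) x = fderiv ℝ (gradient W₂) y := fun x ↦ by
    obtain ⟨x', y, hx', hy, hxy⟩ := hsurj (gradient W₁ x)
    obtain rfl := anti₁.injective hx'
    exact ⟨y, hy, hxy⟩
  choose T hT hHess using hpartner
  have hcomp : gradient W₂ ∘ T = gradient W₁ := funext hT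
  have hTcont : Continuous T :=
    (anti₂.isInducing hG₂.continuous).continuous_iff.2 (hcomp ▸ hG₁.continuous)
  obtain ⟨η, hη⟩ := exists_eq_add_of_hasFDerivAt_id fun x ↦
    hasFDerivAt_id_of_comp_eq hTcont.continuousAt hcomp (hG₁ x).hasFDerivAt
      (hHess x ▸ (hG₂ (T x)).hasFDerivAt)
      (ContinuousLinearMap.isEmbedding_of_mul_norm_sq_le_inner _ hσ (hconv₁ x))
  exact ⟨η, exists_eq_comp_add_add_of_gradient_eq (hW₁.differentiable two_ne_zero)
    (hW₂.differentiable two_ne_zero) fun x ↦ hη x ▸ hT x⟩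

/-- **Lemma 5.2**: two uniformly strongly convex `C²` functions whose gradient maps
are onto and whose Hessians agree at points with the same gradient coincide up to
a translation and an additive constant. -/
theorem strongly_convex_hessian_rigidity
    (n : ℕ) (hn : 1 ≤ n)
    (W₁ W₂ : EuclideanSpace ℝ (Fin n) → ℝ)
    (hW₁ : ContDiff ℝ 2 W₁) (hW₂ : ContDiff ℝ 2 W₂)
    (σ : ℝ) (hσ : 0 < σ)
    (hconv₁ : ∀ x v : EuclideanSpace ℝ (Fin n),
      σ * ‖v‖ ^ 2 ≤ (inner ℝ (fderiv ℝ (gradient W₁) x v) v : ℝ))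
    (hconv₂ : ∀ x v : EuclideanSpace ℝ (Fin n),
      σ * ‖v‖ ^ 2 ≤ (inner ℝ (fderiv ℝ (gradient W₂) x v) v : ℝ))
    (hsurj : ∀ ξ : EuclideanSpace ℝ (Fin n), ∃ x y : EuclideanSpace ℝ (Fin n),
      gradient W₁ x = ξ ∧ gradient W₂ y = ξ ∧
      fderiv ℝ (gradient W₁) x = fderiv ℝ (gradient W₂) y) :
    ∃ (η : EuclideanSpace ℝ (Fin n)) (b : ℝ), ∀ x, W₁ x = W₂ (x + η) + b :=
  strongly_convex_hessian_rigidity_general n W₁ W₂ hW₁ hW₂ σ hσ hconv₁ hconv₂ hsurj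
end

section
/- Let n ≥ 1 and let p, q ∈ ℝ with −1/n < p ≤ q. Suppose the Borell–Brascamp–Lieb inequality holds with exponent p, i.e.: for every λ ∈ (0,1) and all Lebesgue integrable f, g, h : ℝⁿ → [0,∞) satisfying h((1−λ)y+λz) ≥ M_p(f(y), g(z); λ) for almost every (y,z) ∈ ℝⁿ×ℝⁿ, one has ∫h ≥ M_{p/(1+np)}(∫f, ∫g; λ). Then the Borell–Brascamp–Lieb inequality also holds with exponent q: for every λ ∈ (0,1) and all integrable f, g, h : ℝⁿ → [0,∞) satisfying h((1−λ)y+λz) ≥ M_q(f(y), g(z); λ) for almost every (y,z), one has ∫h ≥ M_{q/(1+nq)}(∫f, ∫g; λ). (Proposition A.1.) -/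
open MeasureTheory

/-- The λ-weighted α-power mean of two nonnegative numbers. -/
noncomputable def powerMean (α lam a b : ℝ) : ℝ :=
  if 0 < a ∧ 0 < b then
    if α = 0 then a ^ (1 - lam) * b ^ lam
    else ((1 - lam) * a ^ α + lam * b ^ α) ^ (1 / α)
  else 0

/-- The Borell–Brascamp–Lieb inequality in ℝⁿ with exponent `p`. -/
def BBLHolds (n : ℕ) (p : ℝ) : Prop :=
  ∀ lam : ℝ, lam ∈ Set.Ioo (0 : ℝ) 1 →
    ∀ f g h : EuclideanSpace ℝ (Fin n) → ℝ,
      (∀ x, 0 ≤ f x) → (∀ x, 0 ≤ g x) → (∀ x, 0 ≤ h x) →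
      Integrable f → Integrable g → Integrable h →
      (∀ᵐ q ∂(volume : Measure (EuclideanSpace ℝ (Fin n) × EuclideanSpace ℝ (Fin n))),
        powerMean p lam (f q.1) (g q.2) ≤ h ((1 - lam) • q.1 + lam • q.2)) →
      powerMean (p / (1 + n * p)) lam (∫ x, f x) (∫ x, g x) ≤ ∫ x, h x

/-!
Rescale `f` and `g` by a dilation and a constant factor each, and pass to a new weight `μ`, so
that the two rescaled functions have the same integral and, by `M_p ≤ M_q`, the `q`-hypothesis
for `(f, g, h)` becomes a `p`-hypothesis for the rescaled triple. As `M_r(K, K; μ) = K` for every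
`r`, the exponent `p / (1 + n p)` then plays no role, and undoing the scaling gives exactly
`M_{q/(1+nq)}(∫ f, ∫ g; λ) ≤ ∫ h`.
-/

open Real

section PowerMean

variable {α p q r ε lam a b x y F G : ℝ}

lemma one_sub_mul_add_mul_pos (h0 : 0 ≤ lam) (h1 : lam ≤ 1) (hx : 0 < x) (hy : 0 < y) :
    0 < (1 - lam) * x + lam * y := by
  nlinarith [mul_nonneg h0 hy.le, mul_nonneg (sub_nonneg.2 h1) hx.le]

lemma rpow_arith_mean2_le_arith_mean2_rpow (h0 : 0 ≤ lam) (h1 : lam ≤ 1) (hs : 1 ≤ α)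
    (hx : 0 ≤ x) (hy : 0 ≤ y) :
    ((1 - lam) * x + lam * y) ^ α ≤ (1 - lam) * x ^ α + lam * y ^ α :=
  (convexOn_rpow hs).2 hx hy (sub_nonneg.2 h1) h0 (by ring)

lemma rpow_geom_mean2 (ha : 0 ≤ a) (hb : 0 ≤ b) (x : ℝ) :
    (a ^ x) ^ (1 - lam) * (b ^ x) ^ lam = (a ^ (1 - lam) * b ^ lam) ^ x := by
  rw [mul_rpow (by positivity) (by positivity), ← rpow_mul ha, ← rpow_mul ha, ← rpow_mul hb,
    ← rpow_mul hb, mul_comm x, mul_comm x]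

lemma powerMean_of_not_pos (h : ¬(0 < a ∧ 0 < b)) : powerMean α lam a b = 0 := if_neg h

lemma powerMean_zero (ha : 0 < a) (hb : 0 < b) :
    powerMean 0 lam a b = a ^ (1 - lam) * b ^ lam := by
  rw [powerMean, if_pos ⟨ha, hb⟩, if_pos rfl]

lemma powerMean_of_ne_zero (hα : α ≠ 0) (ha : 0 < a) (hb : 0 < b) :
    powerMean α lam a b = ((1 - lam) * a ^ α + lam * b ^ α) ^ (1 / α) := by
  rw [powerMean, if_pos ⟨ha, hb⟩, if_neg hα]

lemma powerMean_pos (h0 : 0 ≤ lam) (h1 : lam ≤ 1) (ha : 0 < a) (hb : 0 < b) :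
    0 < powerMean α lam a b := by
  rcases eq_or_ne α 0 with rfl | hα
  · rw [powerMean_zero ha hb]
    positivity
  · rw [powerMean_of_ne_zero hα ha hb]
    have := one_sub_mul_add_mul_pos h0 h1 (rpow_pos_of_pos ha α) (rpow_pos_of_pos hb α)
    positivity

lemma powerMean_self (ha : 0 < a) : powerMean α lam a a = a := by
  rcases eq_or_ne α 0 with rfl | hα
  · rw [powerMean_zero ha ha, ← rpow_add ha, sub_add_cancel, rpow_one]
  · rw [powerMean_of_ne_zero hα ha ha, ← add_mul, sub_add_cancel, one_mul, ← rpow_mul ha.le,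
      mul_one_div_cancel hα, rpow_one]

lemma powerMean_le_powerMean_zero (h0 : 0 ≤ lam) (h1 : lam ≤ 1) (hp : p ≤ 0)
    (ha : 0 < a) (hb : 0 < b) : powerMean p lam a b ≤ powerMean 0 lam a b := by
  rcases hp.lt_or_eq with hp | rfl
  · rw [powerMean_of_ne_zero hp.ne ha hb, powerMean_zero ha hb]
    calc ((1 - lam) * a ^ p + lam * b ^ p) ^ (1 / p)
        ≤ ((a ^ p) ^ (1 - lam) * (b ^ p) ^ lam) ^ (1 / p) :=
          rpow_le_rpow_of_nonpos (by positivity)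
            (geom_mean_le_arith_mean2_weighted (sub_nonneg.2 h1) h0 (by positivity)
              (by positivity) (by ring))
            (by rw [one_div]; exact inv_nonpos.2 hp.le)
      _ = a ^ (1 - lam) * b ^ lam := by
          rw [rpow_geom_mean2 ha.le hb.le, ← rpow_mul (by positivity), mul_one_div_cancel hp.ne,
            rpow_one]
  · exact le_rfl

lemma powerMean_zero_le_powerMean (h0 : 0 ≤ lam) (h1 : lam ≤ 1) (hq : 0 ≤ q)
    (ha : 0 < a) (hb : 0 < b) : powerMean 0 lam a b ≤ powerMean q lam a b := by
  rcases hq.lt_or_eq with hq | rfl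
  · rw [powerMean_of_ne_zero hq.ne' ha hb, powerMean_zero ha hb]
    calc a ^ (1 - lam) * b ^ lam = ((a ^ q) ^ (1 - lam) * (b ^ q) ^ lam) ^ (1 / q) := by
          rw [rpow_geom_mean2 ha.le hb.le, ← rpow_mul (by positivity), mul_one_div_cancel hq.ne',
            rpow_one]
      _ ≤ ((1 - lam) * a ^ q + lam * b ^ q) ^ (1 / q) :=
          rpow_le_rpow (by positivity)
            (geom_mean_le_arith_mean2_weighted (sub_nonneg.2 h1) h0 (by positivity)
              (by positivity) (by ring))
            (by positivity)
  · exact le_rfl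

lemma powerMean_le_powerMean_of_pos (h0 : 0 ≤ lam) (h1 : lam ≤ 1) (hp : 0 < p) (hpq : p ≤ q)
    (ha : 0 < a) (hb : 0 < b) : powerMean p lam a b ≤ powerMean q lam a b := by
  have hq : 0 < q := hp.trans_le hpq
  rw [powerMean_of_ne_zero hp.ne' ha hb, powerMean_of_ne_zero hq.ne' ha hb]
  have hsum := one_sub_mul_add_mul_pos h0 h1 (rpow_pos_of_pos ha p) (rpow_pos_of_pos hb p)
  have hJensen := rpow_arith_mean2_le_arith_mean2_rpow h0 h1 ((one_le_div hp).2 hpq)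
    (rpow_pos_of_pos ha p).le (rpow_pos_of_pos hb p).le
  rw [← rpow_mul ha.le, ← rpow_mul hb.le, mul_div_cancel₀ _ hp.ne'] at hJensen
  calc ((1 - lam) * a ^ p + lam * b ^ p) ^ (1 / p)
      = (((1 - lam) * a ^ p + lam * b ^ p) ^ (q / p)) ^ (1 / q) := by
        rw [← rpow_mul hsum.le]
        field_simp
    _ ≤ ((1 - lam) * a ^ q + lam * b ^ q) ^ (1 / q) :=
        rpow_le_rpow (by positivity) hJensen (by positivity)

lemma powerMean_le_powerMean_of_neg (h0 : 0 ≤ lam) (h1 : lam ≤ 1) (hpq : p ≤ q) (hq : q < 0)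
    (ha : 0 < a) (hb : 0 < b) : powerMean p lam a b ≤ powerMean q lam a b := by
  have hp : p < 0 := hpq.trans_lt hq
  rw [powerMean_of_ne_zero hp.ne ha hb, powerMean_of_ne_zero hq.ne ha hb]
  have hsum := one_sub_mul_add_mul_pos h0 h1 (rpow_pos_of_pos ha q) (rpow_pos_of_pos hb q)
  have hJensen := rpow_arith_mean2_le_arith_mean2_rpow h0 h1 ((one_le_div_of_neg hq).2 hpq)
    (rpow_pos_of_pos ha q).le (rpow_pos_of_pos hb q).le
  rw [← rpow_mul ha.le, ← rpow_mul hb.le, mul_div_cancel₀ _ hq.ne] at hJensen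
  calc ((1 - lam) * a ^ p + lam * b ^ p) ^ (1 / p)
      ≤ (((1 - lam) * a ^ q + lam * b ^ q) ^ (p / q)) ^ (1 / p) :=
        rpow_le_rpow_of_nonpos (by positivity) hJensen (by rw [one_div]; exact inv_nonpos.2 hp.le)
    _ = ((1 - lam) * a ^ q + lam * b ^ q) ^ (1 / q) := by
        rw [← rpow_mul hsum.le, div_mul_div_comm, mul_one, mul_comm q, div_mul_cancel_left₀ hp.ne,
          one_div]

lemma powerMean_le_powerMean (h0 : 0 ≤ lam) (h1 : lam ≤ 1) (hpq : p ≤ q) :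
    powerMean p lam a b ≤ powerMean q lam a b := by
  by_cases hab : 0 < a ∧ 0 < b
  · obtain ⟨ha, hb⟩ := hab
    rcases lt_or_ge q 0 with hq | hq
    · exact powerMean_le_powerMean_of_neg h0 h1 hpq hq ha hb
    rcases lt_or_ge 0 p with hp | hp
    · exact powerMean_le_powerMean_of_pos h0 h1 hp hpq ha hb
    · exact (powerMean_le_powerMean_zero h0 h1 hp ha hb).trans
        (powerMean_zero_le_powerMean h0 h1 hq ha hb)
  · rw [powerMean_of_not_pos hab, powerMean_of_not_pos hab]

lemma powerMean_rpow (h0 : 0 ≤ lam) (h1 : lam ≤ 1) (hr : r ≠ 0) (hF : 0 < F) (hG : 0 < G) :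
    powerMean r lam F G ^ r = (1 - lam) * F ^ r + lam * G ^ r := by
  have := one_sub_mul_add_mul_pos h0 h1 (rpow_pos_of_pos hF r) (rpow_pos_of_pos hG r)
  rw [powerMean_of_ne_zero hr hF hG, ← rpow_mul this.le, one_div_mul_cancel hr, rpow_one]

lemma add_rpow_div_powerMean_eq_one (h0 : 0 ≤ lam) (h1 : lam ≤ 1) (hF : 0 < F) (hG : 0 < G) :
    (1 - lam) * (F / powerMean r lam F G) ^ r + lam * (G / powerMean r lam F G) ^ r = 1 := by
  rcases eq_or_ne r 0 with rfl | hr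
  · simp
  have hT := powerMean_pos (α := r) h0 h1 hF hG
  rw [div_rpow hF.le hT.le, div_rpow hG.le hT.le, powerMean_rpow h0 h1 hr hF hG]
  have := one_sub_mul_add_mul_pos h0 h1 (rpow_pos_of_pos hF r) (rpow_pos_of_pos hG r)
  field_simp

lemma powerMean_rescale (h0 : 0 ≤ lam) (h1 : lam ≤ 1) (hF : 0 < F) (hG : 0 < G) :
    powerMean q (lam * (G / powerMean (ε * q) lam F G) ^ (ε * q)) (F ^ (-ε) * a) (G ^ (-ε) * b)
      = powerMean (ε * q) lam F G ^ (-ε) * powerMean q lam a b := by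
  have hT := powerMean_pos (α := ε * q) h0 h1 hF hG
  have hweights := add_rpow_div_powerMean_eq_one (r := ε * q) h0 h1 hF hG
  set T := powerMean (ε * q) lam F G
  by_cases hab : 0 < a ∧ 0 < b
  swap
  · rw [powerMean_of_not_pos hab, powerMean_of_not_pos, mul_zero]
    exact fun h ↦ hab ⟨pos_of_mul_pos_right h.1 (by positivity),
      pos_of_mul_pos_right h.2 (by positivity)⟩
  obtain ⟨ha, hb⟩ := hab
  rcases eq_or_ne q 0 with rfl | hq
  · have hT0 : T = F ^ (1 - lam) * G ^ lam := by
      simp only [T, mul_zero]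
      exact powerMean_zero hF hG
    simp only [mul_zero, rpow_zero, mul_one]
    rw [powerMean_zero (by positivity) (by positivity), powerMean_zero ha hb, hT0,
      mul_rpow (by positivity) ha.le, mul_rpow (by positivity) hb.le, ← rpow_geom_mean2 hF.le hG.le]
    ring
  have hscale : ∀ X c : ℝ, 0 < X → 0 < c → (X / T) ^ (ε * q) * (X ^ (-ε) * c) ^ q
      = T ^ (-(ε * q)) * c ^ q := by
    intro X c hX hc
    rw [div_rpow hX.le hT.le, mul_rpow (by positivity) hc.le, ← rpow_mul hX.le, rpow_neg hT.le,
      neg_mul, rpow_neg hX.le]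
    field_simp
  have hsum : (1 - lam * (G / T) ^ (ε * q)) * (F ^ (-ε) * a) ^ q
      + lam * (G / T) ^ (ε * q) * (G ^ (-ε) * b) ^ q
      = T ^ (-(ε * q)) * ((1 - lam) * a ^ q + lam * b ^ q) := by
    have h1μ : 1 - lam * (G / T) ^ (ε * q) = (1 - lam) * (F / T) ^ (ε * q) := by linarith
    rw [h1μ, mul_assoc, mul_assoc lam, hscale F a hF ha, hscale G b hG hb]
    ring
  rw [powerMean_of_ne_zero hq (by positivity) (by positivity), powerMean_of_ne_zero hq ha hb, hsum,
    mul_rpow (by positivity) (one_sub_mul_add_mul_pos h0 h1 (by positivity) (by positivity)).le,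
    ← rpow_mul hT.le, neg_mul, mul_assoc, mul_one_div_cancel hq, mul_one]

end PowerMean

section BBL

variable {n : ℕ} {p q lam μ ρ₁ ρ₂ c₁ c₂ κ : ℝ}

lemma BBLHolds.rescale (hBBL : BBLHolds n p) (hμ : μ ∈ Set.Ioo 0 1) (hρ₁ : 0 < ρ₁) (hρ₂ : 0 < ρ₂)
    (hc₁ : 0 ≤ c₁) (hc₂ : 0 ≤ c₂) (hκ : 0 ≤ κ) (hμ₁ : 1 - μ = (1 - lam) * ρ₁) (hμ₂ : μ = lam * ρ₂)
    (hmean : ∀ a b, 0 ≤ a → 0 ≤ b → powerMean p μ (c₁ * a) (c₂ * b) ≤ κ * powerMean q lam a b)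
    {f g h : EuclideanSpace ℝ (Fin n) → ℝ} (hf : ∀ x, 0 ≤ f x) (hg : ∀ x, 0 ≤ g x)
    (hh : ∀ x, 0 ≤ h x) (hfi : Integrable f) (hgi : Integrable g) (hhi : Integrable h)
    (hfgh : ∀ᵐ x ∂(volume : Measure (EuclideanSpace ℝ (Fin n) × EuclideanSpace ℝ (Fin n))),
      powerMean q lam (f x.1) (g x.2) ≤ h ((1 - lam) • x.1 + lam • x.2)) :
    powerMean (p / (1 + n * p)) μ (c₁ * (ρ₁ ^ n)⁻¹ * ∫ x, f x) (c₂ * (ρ₂ ^ n)⁻¹ * ∫ x, g x)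
      ≤ κ * ∫ x, h x := by
  have hscale : ∀ (ρ c : ℝ) (u : EuclideanSpace ℝ (Fin n) → ℝ), 0 < ρ →
      ∫ x, c * u (ρ • x) = c * (ρ ^ n)⁻¹ * ∫ x, u x := fun ρ c u hρ ↦ by
    rw [integral_const_mul, Measure.integral_comp_smul_of_nonneg volume u ρ (hR := hρ.le),
      finrank_euclideanSpace_fin, smul_eq_mul, mul_assoc]
  rw [← hscale ρ₁ c₁ f hρ₁, ← hscale ρ₂ c₂ g hρ₂, ← integral_const_mul]
  refine hBBL μ hμ _ _ _ (fun x ↦ mul_nonneg hc₁ (hf _)) (fun x ↦ mul_nonneg hc₂ (hg _))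
    (fun x ↦ mul_nonneg hκ (hh _)) ((hfi.comp_smul hρ₁.ne').const_mul _)
    ((hgi.comp_smul hρ₂.ne').const_mul _) (hhi.const_mul _) ?_
  have hqmp : Measure.QuasiMeasurePreserving (Prod.map (ρ₁ • ·) (ρ₂ • ·))
      (volume : Measure (EuclideanSpace ℝ (Fin n) × EuclideanSpace ℝ (Fin n))) volume := by
    rw [Measure.volume_eq_prod]
    exact QuasiMeasurePreserving.prodMap (Measure.quasiMeasurePreserving_smul volume hρ₁.ne')
      (Measure.quasiMeasurePreserving_smul volume hρ₂.ne')
  filter_upwards [hqmp.ae hfgh] with x hx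
  have hcomb : (1 - μ) • x.1 + μ • x.2 = (1 - lam) • (ρ₁ • x.1) + lam • (ρ₂ • x.2) := by
    rw [smul_smul, smul_smul, hμ₁, hμ₂]
  rw [hcomb]
  exact (hmean _ _ (hf _) (hg _)).trans (mul_le_mul_of_nonneg_left hx hκ)

end BBL

lemma rpow_neg_mul_inv_div_rpow_pow_mul_self {n : ℕ} {ε r F T : ℝ} (hF : 0 < F) (hT : 0 < T)
    (h : ε + n * r = 1) : F ^ (-ε) * (((F / T) ^ r) ^ n)⁻¹ * F = T ^ (n * r) := by
  have hF' : F ^ (-ε) * F = F ^ (n * r) := by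
    rw [← rpow_add_one hF.ne', show -ε + 1 = n * r by linarith]
  rw [mul_right_comm, hF', ← rpow_natCast, ← rpow_mul (div_pos hF hT).le, div_rpow hF.le hT.le,
    mul_comm r]
  have := rpow_pos_of_pos hF (n * r)
  field_simp

theorem bbl_exponent_monotone_general
    (n : ℕ) (p q : ℝ) (hp : -1 / (n : ℝ) < p) (hpq : p ≤ q)
    (hBBL : BBLHolds n p) : BBLHolds n q := by
  intro lam hlam f g h hf hg hh hfi hgi hhi hfgh
  have hnq : 0 < 1 + n * q := by
    rcases (Nat.cast_nonneg n : (0 : ℝ) ≤ n).eq_or_lt with hn | hn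
    · simp [← hn]
    · nlinarith [(div_lt_iff₀ hn).1 (hp.trans_le hpq)]
  set F := ∫ x, f x
  set G := ∫ x, g x
  by_cases hFG : 0 < F ∧ 0 < G
  swap
  · rw [powerMean_of_not_pos hFG]
    exact integral_nonneg hh
  obtain ⟨hF, hG⟩ := hFG
  set ε := 1 / (1 + n * q)
  have hε : ε + n * (ε * q) = 1 := by
    rw [show ε + n * (ε * q) = ε * (1 + n * q) by ring]
    exact one_div_mul_cancel hnq.ne'
  rw [show q / (1 + n * q) = ε * q by ring]
  set T := powerMean (ε * q) lam F G
  have hT : 0 < T := powerMean_pos hlam.1.le hlam.2.le hF hG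
  have hweights := add_rpow_div_powerMean_eq_one (r := ε * q) hlam.1.le hlam.2.le hF hG
  have hw₁ : 0 < (1 - lam) * (F / T) ^ (ε * q) := mul_pos (sub_pos.2 hlam.2) (by positivity)
  have hμ : lam * (G / T) ^ (ε * q) ∈ Set.Ioo 0 1 :=
    ⟨mul_pos hlam.1 (by positivity), by linarith⟩
  -- with these dilations and factors both rescaled functions have integral `T ^ (n * (ε * q))`
  have hmass := hBBL.rescale (ρ₁ := (F / T) ^ (ε * q)) (ρ₂ := (G / T) ^ (ε * q))
    (c₁ := F ^ (-ε)) (c₂ := G ^ (-ε)) (κ := T ^ (-ε)) hμ (by positivity) (by positivity)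
    (by positivity) (by positivity) (by positivity) (by linarith) rfl
    (fun a b _ _ ↦ (powerMean_le_powerMean hμ.1.le hμ.2.le hpq).trans
      (powerMean_rescale hlam.1.le hlam.2.le hF hG).le)
    hf hg hh hfi hgi hhi hfgh
  rw [rpow_neg_mul_inv_div_rpow_pow_mul_self hF hT hε,
    rpow_neg_mul_inv_div_rpow_pow_mul_self hG hT hε, powerMean_self (by positivity)] at hmass
  calc T = T ^ ε * T ^ (n * (ε * q)) := by rw [← rpow_add hT, hε, rpow_one]
    _ ≤ T ^ ε * (T ^ (-ε) * ∫ x, h x) := by gcongr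
    _ = ∫ x, h x := by rw [← mul_assoc, ← rpow_add hT, add_neg_cancel, rpow_zero, one_mul]

/-- **Proposition A.1**: BBL with exponent `p` implies BBL with any exponent `q ≥ p`. -/
theorem bbl_exponent_monotone
    (n : ℕ) (hn : 1 ≤ n) (p q : ℝ) (hp : -1 / (n : ℝ) < p) (hpq : p ≤ q)
    (hBBL : BBLHolds n p) : BBLHolds n q :=
  bbl_exponent_monotone_general n p q hp hpq hBBL
end

section
/- Let n = 1, λ ∈ (0,1), −1 < m < 0, and set α := (m−1)/2 ∈ (−1, −1/2). For each i ∈ {0, 1, λ}, let φᵢ : ℝ → (0,∞) be a positive C^∞ function belonging to L¹(ℝ) ∩ L^∞(ℝ) such that φᵢ^m is Lipschitz continuous on ℝ. If φ_λ((1−λ)y + λz) ≥ M_α(φ₀(y), φ₁(z); λ) for all y, z ∈ ℝ, then ‖φ_λ‖_{L¹(ℝ)} ≥ M_{α/(α+1)}(‖φ₀‖_{L¹(ℝ)}, ‖φ₁‖_{L¹(ℝ)}; λ). (Proposition 4.2.) -/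
open MeasureTheory Set

/-- Two-point weighted Hölder inequality. -/
lemma holder2 {w1 w2 s P1 P2 Q1 Q2 : ℝ} (hw1 : 0 < w1) (hw2 : 0 < w2)
    (hs : 0 < s) (hs1 : s < 1) (hP1 : 0 < P1) (hP2 : 0 < P2) (hQ1 : 0 < Q1) (hQ2 : 0 < Q2) :
    w1 * (P1 ^ s * Q1 ^ (1 - s)) + w2 * (P2 ^ s * Q2 ^ (1 - s)) ≤
      (w1 * P1 + w2 * P2) ^ s * (w1 * Q1 + w2 * Q2) ^ (1 - s) := by
  set SP := w1 * P1 + w2 * P2 with hSP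
  set SQ := w1 * Q1 + w2 * Q2 with hSQ
  have hSPpos : 0 < SP := by positivity
  have hSQpos : 0 < SQ := by positivity
  have key : ∀ P Q : ℝ, 0 < P → 0 < Q →
      P ^ s * Q ^ (1 - s) ≤ (s * (P / SP) + (1 - s) * (Q / SQ)) * (SP ^ s * SQ ^ (1 - s)) := by
    intro P Q hP hQ
    have h := Real.geom_mean_le_arith_mean2_weighted (w₁ := s) (w₂ := 1 - s)
      (p₁ := P / SP) (p₂ := Q / SQ) hs.le (by linarith)
      (div_nonneg hP.le hSPpos.le) (div_nonneg hQ.le hSQpos.le) (by ring)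
    have e : (P / SP) ^ s * (Q / SQ) ^ (1 - s)
        = (P ^ s * Q ^ (1 - s)) / (SP ^ s * SQ ^ (1 - s)) := by
      rw [Real.div_rpow hP.le hSPpos.le, Real.div_rpow hQ.le hSQpos.le]; ring
    rw [e, div_le_iff₀ (by positivity)] at h
    exact h
  have h1 := key P1 Q1 hP1 hQ1
  have h2 := key P2 Q2 hP2 hQ2
  calc w1 * (P1 ^ s * Q1 ^ (1 - s)) + w2 * (P2 ^ s * Q2 ^ (1 - s))
      ≤ w1 * ((s * (P1 / SP) + (1 - s) * (Q1 / SQ)) * (SP ^ s * SQ ^ (1 - s)))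
        + w2 * ((s * (P2 / SP) + (1 - s) * (Q2 / SQ)) * (SP ^ s * SQ ^ (1 - s))) := by
        exact add_le_add (mul_le_mul_of_nonneg_left h1 hw1.le)
          (mul_le_mul_of_nonneg_left h2 hw2.le)
    _ = SP ^ s * SQ ^ (1 - s) := by
        field_simp
        ring

/-- Reverse two-point Hölder for exponent `θ > 1`. -/
lemma holder2_rev {w1 w2 θ X1 X2 Y1 Y2 : ℝ} (hw1 : 0 < w1) (hw2 : 0 < w2) (hθ : 1 < θ)
    (hX1 : 0 < X1) (hX2 : 0 < X2) (hY1 : 0 < Y1) (hY2 : 0 < Y2) :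
    (w1 * X1 + w2 * X2) ^ θ * (w1 * Y1 + w2 * Y2) ^ (1 - θ) ≤
      w1 * (X1 ^ θ * Y1 ^ (1 - θ)) + w2 * (X2 ^ θ * Y2 ^ (1 - θ)) := by
  have hθ0 : 0 < θ := by linarith
  have e : ∀ X Y : ℝ, 0 < X → 0 < Y →
      (X ^ θ * Y ^ (1 - θ)) ^ (1 / θ) * Y ^ (1 - 1 / θ) = X := by
    intro X Y hX hY
    rw [Real.mul_rpow (by positivity) (by positivity), ← Real.rpow_mul hX.le,
      ← Real.rpow_mul hY.le, mul_assoc, ← Real.rpow_add hY]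
    have e1 : θ * (1 / θ) = 1 := by field_simp
    have e2 : (1 - θ) * (1 / θ) + (1 - 1 / θ) = 0 := by field_simp; ring
    rw [e1, e2, Real.rpow_one, Real.rpow_zero, mul_one]
  have h := holder2 (s := 1 / θ) (P1 := X1 ^ θ * Y1 ^ (1 - θ)) (P2 := X2 ^ θ * Y2 ^ (1 - θ))
    (Q1 := Y1) (Q2 := Y2) hw1 hw2 (by positivity) (by rw [div_lt_one hθ0]; exact hθ)
    (by positivity) (by positivity) hY1 hY2
  rw [e X1 Y1 hX1 hY1, e X2 Y2 hX2 hY2] at h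
  set S := w1 * (X1 ^ θ * Y1 ^ (1 - θ)) + w2 * (X2 ^ θ * Y2 ^ (1 - θ)) with hS
  set SY := w1 * Y1 + w2 * Y2 with hSY
  have hSpos : 0 < S := by positivity
  have hSYpos : 0 < SY := add_pos (mul_pos hw1 hY1) (mul_pos hw2 hY2)
  have h2 : (w1 * X1 + w2 * X2) ^ θ ≤ (S ^ (1 / θ) * SY ^ (1 - 1 / θ)) ^ θ :=
    Real.rpow_le_rpow (by positivity) h hθ0.le
  rw [Real.mul_rpow (by positivity) (by positivity), ← Real.rpow_mul hSpos.le,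
    ← Real.rpow_mul hSYpos.le] at h2
  have e1 : 1 / θ * θ = 1 := by field_simp
  have e2 : (1 - 1 / θ) * θ = θ - 1 := by field_simp
  rw [e1, e2, Real.rpow_one] at h2
  -- h2 : (w1*X1+w2*X2)^θ ≤ S * SY^(θ-1)
  have h3 := mul_le_mul_of_nonneg_right h2 (le_of_lt (Real.rpow_pos_of_pos hSYpos (1 - θ)))
  calc (w1 * X1 + w2 * X2) ^ θ * SY ^ (1 - θ)
      ≤ S * SY ^ (θ - 1) * SY ^ (1 - θ) := h3
    _ = S * SY ^ ((θ - 1) + (1 - θ)) := by rw [mul_assoc, ← Real.rpow_add hSYpos]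
    _ = S := by norm_num

/-- Key pointwise mean inequality:
`M_α(a,b;λ) · M₁(c,d;λ) ≥ M_{α/(α+1)}(ac, bd; λ)` for `α ∈ (−1,0)`. -/
lemma key_mean {lam α a b c d : ℝ} (hl0 : 0 < lam) (hl1 : lam < 1)
    (hα0 : -1 < α) (hα1 : α < 0)
    (ha : 0 < a) (hb : 0 < b) (hc : 0 < c) (hd : 0 < d) :
    ((1 - lam) * (a * c) ^ (α / (α + 1)) + lam * (b * d) ^ (α / (α + 1))) ^ (1 / (α / (α + 1)))
      ≤ ((1 - lam) * a ^ α + lam * b ^ α) ^ (1 / α) * ((1 - lam) * c + lam * d) := by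
  set r := α / (α + 1) with hr
  have hα1p : 0 < α + 1 := by linarith
  have hrneg : r < 0 := div_neg_of_neg_of_pos hα1 hα1p
  have hθ : 1 < 1 / (α + 1) := by rw [lt_div_iff₀ hα1p]; linarith
  have h := holder2_rev (w1 := 1 - lam) (w2 := lam) (θ := 1 / (α + 1))
    (X1 := a ^ α) (X2 := b ^ α) (Y1 := c) (Y2 := d) (by linarith) hl0 hθ
    (Real.rpow_pos_of_pos ha α) (Real.rpow_pos_of_pos hb α) hc hd
  have e1 : (1 : ℝ) - 1 / (α + 1) = r := by rw [hr]; field_simp; ring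
  have e2 : ∀ x : ℝ, 0 < x → (x ^ α) ^ (1 / (α + 1)) = x ^ r := by
    intro x hx
    rw [← Real.rpow_mul hx.le]
    congr 1
    rw [hr]; field_simp
  rw [e1, e2 a ha, e2 b hb] at h
  have e3 : ∀ x y : ℝ, 0 < x → 0 < y → x ^ r * y ^ r = (x * y) ^ r := by
    intro x y hx hy; rw [Real.mul_rpow hx.le hy.le]
  rw [e3 a c ha hc, e3 b d hb hd] at h
  set SX := (1 - lam) * a ^ α + lam * b ^ α with hSX
  set SY := (1 - lam) * c + lam * d with hSY
  set S := (1 - lam) * (a * c) ^ r + lam * (b * d) ^ r with hSdef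
  have hSXpos : 0 < SX := add_pos (mul_pos (by linarith) (Real.rpow_pos_of_pos ha α))
    (mul_pos hl0 (Real.rpow_pos_of_pos hb α))
  have hSYpos : 0 < SY := add_pos (mul_pos (by linarith) hc) (mul_pos hl0 hd)
  have hlhspos : 0 < SX ^ (1 / (α + 1)) * SY ^ r :=
    mul_pos (Real.rpow_pos_of_pos hSXpos _) (Real.rpow_pos_of_pos hSYpos r)
  -- h : SX ^ (1/(α+1)) * SY ^ r ≤ S
  have hrne : r ≠ 0 := hrneg.ne
  have h4 := Real.rpow_le_rpow_of_nonpos hlhspos h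
    (div_nonpos_of_nonneg_of_nonpos zero_le_one hrneg.le)
  -- h4 : S ^ (1/r) ≤ (SX ^ (1/(α+1)) * SY ^ r) ^ (1/r)
  refine h4.trans (le_of_eq ?_)
  rw [Real.mul_rpow (Real.rpow_pos_of_pos hSXpos _).le (Real.rpow_pos_of_pos hSYpos r).le,
    ← Real.rpow_mul hSXpos.le, ← Real.rpow_mul hSYpos.le]
  have e4 : 1 / (α + 1) * (1 / r) = 1 / α := by rw [hr]; field_simp
  have e5 : r * (1 / r) = 1 := by field_simp
  rw [e4, e5, Real.rpow_one]

/-- Existence of the monotone transport parametrization for a positive continuous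
integrable function on ℝ. -/
lemma transport (φ : ℝ → ℝ) (hpos : ∀ x, 0 < φ x) (hc : Continuous φ)
    (hint : Integrable φ) :
    ∃ u : ℝ → ℝ, StrictMonoOn u (Ioo (0:ℝ) 1) ∧
      ∀ t ∈ Ioo (0:ℝ) 1, HasDerivAt u ((∫ s, φ s) / φ (u t)) t := by
  set I := ∫ s, φ s with hI
  have hIpos : 0 < I := by
    rw [hI, MeasureTheory.integral_pos_iff_support_of_nonneg_ae
      (Filter.Eventually.of_forall fun x => (hpos x).le) hint]
    have : Function.support φ = univ := by
      ext x; simp [Function.mem_support, (hpos x).ne']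
    rw [this]
    simp [Real.volume_univ]
  set G : ℝ → ℝ := fun x => ∫ s in Iic x, φ s with hG
  have hGrw : ∀ x : ℝ, G x = (∫ s in Iic 0, φ s) + ∫ s in (0:ℝ)..x, φ s := by
    intro x
    have := intervalIntegral.integral_Iic_sub_Iic (hint.integrableOn) (hint.integrableOn)
      (a := 0) (b := x)
    rw [hG]; dsimp only; linarith
  have hGd : ∀ x, HasDerivAt G (φ x) x := by
    intro x
    have h1 : HasDerivAt (fun y => ∫ s in (0:ℝ)..y, φ s) (φ x) x :=
      intervalIntegral.integral_hasDerivAt_right (hint.intervalIntegrable)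
        (hc.stronglyMeasurableAtFilter _ _) hc.continuousAt
    have h2 := h1.const_add (∫ s in Iic 0, φ s)
    exact h2.congr_of_eventuallyEq (Filter.Eventually.of_forall fun y => (hGrw y))
  have hGcont : Continuous G :=
    Differentiable.continuous (fun x => (hGd x).differentiableAt)
  have hGmono : StrictMono G := by
    intro x y hxy
    have hpos' : 0 < ∫ s in x..y, φ s := by
      rw [intervalIntegral.integral_of_le hxy.le]
      rw [MeasureTheory.integral_Ioc_eq_integral_Ioo]
      apply MeasureTheory.setIntegral_pos_iff_support_of_nonneg_ae
        (Filter.Eventually.of_forall fun s => (hpos s).le) (hint.integrableOn) |>.mpr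
      have : Function.support φ ∩ Ioo x y = Ioo x y := by
        apply inter_eq_right.mpr
        intro s _; simp [Function.mem_support, (hpos s).ne']
      rw [this]
      simpa using hxy
    have := intervalIntegral.integral_Iic_sub_Iic (hint.integrableOn) (hint.integrableOn)
      (a := x) (b := y)
    have hGy : G y = ∫ s in Iic y, φ s := rfl
    have hGx : G x = ∫ s in Iic x, φ s := rfl
    linarith
  have hGpos : ∀ x, 0 < G x := by
    intro x
    rw [hG]
    apply (MeasureTheory.setIntegral_pos_iff_support_of_nonneg_ae
      (Filter.Eventually.of_forall fun s => (hpos s).le) (hint.integrableOn)).mpr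
    have : Function.support φ ∩ Iic x = Iic x := by
      apply inter_eq_right.mpr; intro s _; simp [Function.mem_support, (hpos s).ne']
    rw [this]; simp
  have htop : Filter.Tendsto G Filter.atTop (nhds I) := by
    have h1 := MeasureTheory.intervalIntegral_tendsto_integral_Ioi 0
      (hint.integrableOn) Filter.tendsto_id
    have h2 := h1.const_add (∫ s in Iic 0, φ s)
    have he : (∫ s in Iic 0, φ s) + ∫ s in Ioi 0, φ s = I := by
      rw [hI, ← MeasureTheory.integral_add_compl (measurableSet_Iic (a := (0:ℝ))) hint]
      congr 1
      rw [compl_Iic]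
    rw [he] at h2
    exact h2.congr fun x => (hGrw x).symm
  have hbot : Filter.Tendsto G Filter.atBot (nhds 0) := by
    have h1 := MeasureTheory.intervalIntegral_tendsto_integral_Iic 0
      (hint.integrableOn) Filter.tendsto_id
    have h2 := h1.const_sub (∫ s in Iic 0, φ s)
    -- G x = ∫Iic0 - ∫ x..0
    have he : (∫ s in Iic 0, φ s) - (∫ s in Iic 0, φ s) = 0 := by ring
    rw [he] at h2
    refine h2.congr fun x => ?_
    have hsym : ∫ s in (x:ℝ)..0, φ s = -∫ s in (0:ℝ)..x, φ s := by
      rw [intervalIntegral.integral_symm]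
    simp only [id]
    rw [hsym, hGrw x]; ring
  -- surjectivity onto (0, I)
  have hex : ∀ t ∈ Ioo (0:ℝ) 1, ∃ x, G x = t * I := by
    intro t ht
    have hc1 : 0 < t * I := mul_pos ht.1 hIpos
    have hc2 : t * I < I := by nlinarith [ht.2, hIpos]
    obtain ⟨a, ha⟩ := (hbot.eventually (eventually_lt_nhds hc1)).exists
    obtain ⟨b, hb⟩ := (htop.eventually (eventually_gt_nhds hc2)).exists
    have hmem : t * I ∈ Icc (G a) (G b) := ⟨ha.le, hb.le⟩
    exact intermediate_value_univ a b hGcont hmem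
  choose! u hu using hex
  have humono : StrictMonoOn u (Ioo (0:ℝ) 1) := by
    intro s hs t ht hst
    by_contra hle
    push_neg at hle
    have : G (u t) ≤ G (u s) := hGmono.monotone hle
    rw [hu s hs, hu t ht] at this
    nlinarith [hIpos]
  have hucont : ∀ t ∈ Ioo (0:ℝ) 1, ContinuousAt u t := by
    intro t ht
    rw [ContinuousAt, tendsto_order]
    constructor
    · intro a hau
      have h1 : G a < t * I := by rw [← hu t ht]; exact hGmono hau
      have h2 : G a / I < t := (div_lt_iff₀ hIpos).mpr h1
      have h3 : 0 < G a / I := div_pos (hGpos a) hIpos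
      filter_upwards [Ioo_mem_nhds h2 ht.2] with s hs
      have hs' : s ∈ Ioo (0:ℝ) 1 := ⟨h3.trans hs.1, hs.2⟩
      by_contra hle
      push_neg at hle
      have : G (u s) ≤ G a := hGmono.monotone hle
      rw [hu s hs'] at this
      have : s ≤ G a / I := (le_div_iff₀ hIpos).mpr this
      exact absurd hs.1 (not_lt.mpr this)
    · intro b hub
      have h1 : t * I < G b := by rw [← hu t ht]; exact hGmono hub
      have h2 : t < G b / I := (lt_div_iff₀ hIpos).mpr h1
      filter_upwards [Ioo_mem_nhds ht.1 (lt_min h2 ht.2)] with s hs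
      have hs' : s ∈ Ioo (0:ℝ) 1 := ⟨hs.1, hs.2.trans_le (min_le_right _ _)⟩
      by_contra hle
      push_neg at hle
      have : G b ≤ G (u s) := hGmono.monotone hle
      rw [hu s hs'] at this
      have : G b / I ≤ s := (div_le_iff₀ hIpos).mpr this
      exact absurd (hs.2.trans_le (min_le_left _ _)) (not_lt.mpr this)
  refine ⟨u, humono, ?_⟩
  intro t ht
  have hf : HasDerivAt (fun x => G x / I) (φ (u t) / I) (u t) := (hGd (u t)).div_const I
  have hne : φ (u t) / I ≠ 0 := (div_pos (hpos _) hIpos).ne'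
  have hfg : ∀ᶠ s in nhds t, (fun x => G x / I) (u s) = s := by
    filter_upwards [Ioo_mem_nhds ht.1 ht.2] with s hs
    rw [hu s hs]
    field_simp
  have := HasDerivAt.of_local_left_inverse (hucont t ht) hf hne hfg
  have heq : (φ (u t) / I)⁻¹ = I / φ (u t) := by
    rw [inv_div]
  rwa [heq] at this

/-- **Proposition 4.2**: one-dimensional Borell–Brascamp–Lieb inequality with exponent
`α = (m−1)/2 ∈ (−1, −1/2)`, for positive smooth bounded integrable functions whose
`m`-th powers are Lipschitz. -/
theorem bbl_one_dimensional_superfast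
    (lam : ℝ) (hlam : lam ∈ Ioo (0 : ℝ) 1)
    (m : ℝ) (hm : -1 < m ∧ m < 0) (α : ℝ) (hα : α = (m - 1) / 2)
    (φ₀ φ₁ φl : ℝ → ℝ)
    (h₀pos : ∀ x, 0 < φ₀ x) (h₁pos : ∀ x, 0 < φ₁ x) (hlpos : ∀ x, 0 < φl x)
    (h₀sm : ContDiff ℝ (⊤ : ℕ∞) φ₀) (h₁sm : ContDiff ℝ (⊤ : ℕ∞) φ₁) (hlsm : ContDiff ℝ (⊤ : ℕ∞) φl)
    (h₀i : Integrable φ₀) (h₁i : Integrable φ₁) (hli : Integrable φl)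
    (h₀b : ∃ C, ∀ x, φ₀ x ≤ C) (h₁b : ∃ C, ∀ x, φ₁ x ≤ C) (hlb : ∃ C, ∀ x, φl x ≤ C)
    (h₀L : ∃ K : NNReal, LipschitzWith K (fun x => φ₀ x ^ m))
    (h₁L : ∃ K : NNReal, LipschitzWith K (fun x => φ₁ x ^ m))
    (hlL : ∃ K : NNReal, LipschitzWith K (fun x => φl x ^ m))
    (hyp : ∀ y z : ℝ, powerMean α lam (φ₀ y) (φ₁ z) ≤ φl ((1 - lam) * y + lam * z)) :
    powerMean (α / (α + 1)) lam (∫ x, |φ₀ x|) (∫ x, |φ₁ x|) ≤ ∫ x, |φl x| := by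
  obtain ⟨hl0, hl1⟩ := hlam
  have hα0 : -1 < α := by rw [hα]; linarith [hm.1]
  have hα1 : α < 0 := by rw [hα]; linarith [hm.2]
  have hαne : α ≠ 0 := hα1.ne
  have habs : ∀ ψ : ℝ → ℝ, (∀ x, 0 < ψ x) → (fun x => |ψ x|) = ψ :=
    fun ψ h => funext fun x => abs_of_pos (h x)
  rw [habs φ₀ h₀pos, habs φ₁ h₁pos, habs φl hlpos]
  have hIpos : ∀ ψ : ℝ → ℝ, (∀ x, 0 < ψ x) → Integrable ψ → 0 < ∫ x, ψ x := by
    intro ψ h hint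
    rw [MeasureTheory.integral_pos_iff_support_of_nonneg_ae
      (Filter.Eventually.of_forall fun x => (h x).le) hint]
    have : Function.support ψ = univ := by
      ext x; simp [Function.mem_support, (h x).ne']
    rw [this]; simp [Real.volume_univ]
  set I₀ := ∫ x, φ₀ x with hI₀def
  set I₁ := ∫ x, φ₁ x with hI₁def
  have hI₀ : 0 < I₀ := hIpos φ₀ h₀pos h₀i
  have hI₁ : 0 < I₁ := hIpos φ₁ h₁pos h₁i
  obtain ⟨u, humono, hud⟩ := transport φ₀ h₀pos h₀sm.continuous h₀i
  obtain ⟨v, hvmono, hvd⟩ := transport φ₁ h₁pos h₁sm.continuous h₁i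
  set w : ℝ → ℝ := fun t => (1 - lam) * u t + lam * v t with hw
  set W : ℝ → ℝ := fun t => (1 - lam) * (I₀ / φ₀ (u t)) + lam * (I₁ / φ₁ (v t)) with hW
  have hwd : ∀ t ∈ Ioo (0:ℝ) 1, HasDerivAt w (W t) t := fun t ht =>
    ((hud t ht).const_mul _).add ((hvd t ht).const_mul _)
  have hWpos : ∀ t, 0 < W t := fun t =>
    add_pos (mul_pos (by linarith) (div_pos hI₀ (h₀pos _)))
      (mul_pos hl0 (div_pos hI₁ (h₁pos _)))
  have hwinj : InjOn w (Ioo (0:ℝ) 1) := by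
    apply StrictMonoOn.injOn
    intro s hs t ht hst
    have h1 := humono hs ht hst
    have h2 := hvmono hs ht hst
    simp only [hw]
    nlinarith
  set r := α / (α + 1) with hrdef
  have hrne : r ≠ 0 := div_ne_zero hαne (by linarith)
  rw [powerMean, if_pos ⟨hI₀, hI₁⟩, if_neg hrne]
  have hpt : ∀ t ∈ Ioo (0:ℝ) 1,
      ((1 - lam) * I₀ ^ r + lam * I₁ ^ r) ^ (1 / r) ≤ |W t| • φl (w t) := by
    intro t ht
    have hWt := hWpos t
    rw [abs_of_pos hWt, smul_eq_mul]
    have h1 : powerMean α lam (φ₀ (u t)) (φ₁ (v t)) ≤ φl (w t) := hyp (u t) (v t)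
    rw [powerMean, if_pos ⟨h₀pos _, h₁pos _⟩, if_neg hαne] at h1
    have h2 := key_mean hl0 hl1 hα0 hα1 (h₀pos (u t)) (h₁pos (v t))
      (div_pos hI₀ (h₀pos (u t))) (div_pos hI₁ (h₁pos (v t)))
    have e0 : φ₀ (u t) * (I₀ / φ₀ (u t)) = I₀ := by
      rw [mul_comm]; exact div_mul_cancel₀ _ (h₀pos _).ne'
    have e1 : φ₁ (v t) * (I₁ / φ₁ (v t)) = I₁ := by
      rw [mul_comm]; exact div_mul_cancel₀ _ (h₁pos _).ne'
    rw [e0, e1] at h2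
    calc ((1 - lam) * I₀ ^ r + lam * I₁ ^ r) ^ (1 / r)
        ≤ ((1 - lam) * φ₀ (u t) ^ α + lam * φ₁ (v t) ^ α) ^ (1 / α) * W t := h2
      _ ≤ φl (w t) * W t := mul_le_mul_of_nonneg_right h1 hWt.le
      _ = W t * φl (w t) := mul_comm _ _
  have hIntOn : IntegrableOn (fun t => |W t| • φl (w t)) (Ioo (0:ℝ) 1) := by
    rw [← MeasureTheory.integrableOn_image_iff_integrableOn_abs_deriv_smul
      measurableSet_Ioo (fun t ht => (hwd t ht).hasDerivWithinAt) hwinj]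
    exact hli.integrableOn
  have hcov := MeasureTheory.integral_image_eq_integral_abs_deriv_smul
    measurableSet_Ioo (fun t ht => (hwd t ht).hasDerivWithinAt) hwinj φl
  have hone : (volume (Ioo (0:ℝ) 1)).toReal = 1 := by
    simp [Real.volume_Ioo]
  calc ((1 - lam) * I₀ ^ r + lam * I₁ ^ r) ^ (1 / r)
      = ((1 - lam) * I₀ ^ r + lam * I₁ ^ r) ^ (1 / r) * (volume (Ioo (0:ℝ) 1)).toReal := by
        rw [hone, mul_one]
    _ ≤ ∫ t in Ioo (0:ℝ) 1, |W t| • φl (w t) :=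
        by have := MeasureTheory.setIntegral_ge_of_const_le measurableSet_Ioo
             (by simp [Real.volume_Ioo]) hpt hIntOn
           rw [smul_eq_mul, mul_comm] at this; exact this
    _ = ∫ x in w '' Ioo (0:ℝ) 1, φl x := hcov.symm
    _ ≤ ∫ x, φl x := MeasureTheory.setIntegral_le_integral hli
        (Filter.Eventually.of_forall fun x => (hlpos x).le)
end

section
/- Let n ≥ 1, λ ∈ (0,1), and let X₁, X₂, Y be n×n real symmetric matrices with X₁ and X₂ negative definite. Assume that for all h, h₁, h₂ ∈ ℝⁿ with h = (1−λ)h₁ + λh₂ one has ⟨Yh, h⟩ ≥ (1−λ)⟨X₁h₁, h₁⟩ + λ⟨X₂h₂, h₂⟩. Then ((1−λ)X₁⁻¹ + λX₂⁻¹)⁻¹ ≤ Y in the Loewner order, i.e. Y − ((1−λ)X₁⁻¹ + λX₂⁻¹)⁻¹ is positive semidefinite. (Inequality (5.9), the Hessian inequality at a minimum of an infimal-convolution type expression.) -/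
/-!
Put `M = (1-λ)X₁⁻¹ + λX₂⁻¹`, which is negative definite. Given `h`, the split
`hᵢ = Xᵢ⁻¹ M⁻¹ h` satisfies `h = (1-λ)h₁ + λh₂` and `(1-λ)⟨X₁h₁, h₁⟩ + λ⟨X₂h₂, h₂⟩ = ⟨M⁻¹h, h⟩`,
so the hypothesis gives `⟨M⁻¹h, h⟩ ≤ ⟨Yh, h⟩` for every `h`.
-/

namespace Matrix

variable {ι R : Type*} [Fintype ι] [DecidableEq ι] [CommRing R]

theorem inv_neg (A : Matrix ι ι R) : (-A)⁻¹ = -A⁻¹ := by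
  by_cases hA : IsUnit A.det
  · exact inv_eq_left_inv (by rw [neg_mul_neg, nonsing_inv_mul _ hA])
  · have hnA : ¬IsUnit (-A).det := by
      rwa [← isUnit_iff_isUnit_det, IsUnit.neg_iff, isUnit_iff_isUnit_det]
    rw [nonsing_inv_apply_not_isUnit _ hA, nonsing_inv_apply_not_isUnit _ hnA, neg_zero]

theorem dotProduct_mulVec_smul_inv_add_smul_inv {X₁ X₂ : Matrix ι ι R}
    (hX₁ : IsUnit X₁.det) (hX₂ : IsUnit X₂.det) (a b : R) (u : ι → R) :
    a * (X₁ *ᵥ (X₁⁻¹ *ᵥ u) ⬝ᵥ X₁⁻¹ *ᵥ u) + b * (X₂ *ᵥ (X₂⁻¹ *ᵥ u) ⬝ᵥ X₂⁻¹ *ᵥ u) =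
      u ⬝ᵥ (a • X₁⁻¹ + b • X₂⁻¹) *ᵥ u := by
  simp only [mulVec_mulVec, mul_nonsing_inv _ hX₁, mul_nonsing_inv _ hX₂, one_mulVec, add_mulVec,
    smul_mulVec, dotProduct_add, dotProduct_smul, smul_eq_mul]

end Matrix

open Matrix

theorem hessian_harmonic_mean_le_general
    (n : ℕ) (lam : ℝ) (hlam : lam ∈ Set.Ioo (0 : ℝ) 1)
    (X₁ X₂ Y : Matrix (Fin n) (Fin n) ℝ)
    (hYs : Y.IsSymm)
    (hX₁ : (-X₁).PosDef) (hX₂ : (-X₂).PosDef)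
    (hineq : ∀ h h₁ h₂ : Fin n → ℝ, h = (1 - lam) • h₁ + lam • h₂ →
      (1 - lam) * (X₁.mulVec h₁ ⬝ᵥ h₁) + lam * (X₂.mulVec h₂ ⬝ᵥ h₂) ≤
        Y.mulVec h ⬝ᵥ h) :
    (Y - ((1 - lam) • X₁⁻¹ + lam • X₂⁻¹)⁻¹).PosSemidef := by
  obtain ⟨hlam₀, hlam₁⟩ := hlam
  set M := (1 - lam) • X₁⁻¹ + lam • X₂⁻¹
  have hnegM : (-M).PosDef := by
    have hM : -M = (1 - lam) • (-X₁)⁻¹ + lam • (-X₂)⁻¹ := by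
      simp only [M, Matrix.inv_neg, smul_neg, neg_add]
    rw [hM]
    exact (hX₁.inv.smul (sub_pos.2 hlam₁)).add (hX₂.inv.smul hlam₀)
  have isUnit_det {A : Matrix (Fin n) (Fin n) ℝ} (hA : (-A).PosDef) : IsUnit A.det := by
    simpa [isUnit_iff_isUnit_det] using hA.isUnit.neg
  refine posSemidef_iff_dotProduct_mulVec.2
    ⟨(isHermitian_iff_isSymm.2 hYs).sub (neg_neg M ▸ hnegM.isHermitian.neg).inv, fun x => ?_⟩
  have hMx : M *ᵥ (M⁻¹ *ᵥ x) = x := by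
    rw [mulVec_mulVec, mul_nonsing_inv _ (isUnit_det hnegM), one_mulVec]
  have key := hineq x (X₁⁻¹ *ᵥ (M⁻¹ *ᵥ x)) (X₂⁻¹ *ᵥ (M⁻¹ *ᵥ x))
    (by rw [← smul_mulVec, ← smul_mulVec, ← add_mulVec]; exact hMx.symm)
  rw [dotProduct_mulVec_smul_inv_add_smul_inv (isUnit_det hX₁) (isUnit_det hX₂), hMx,
    dotProduct_comm] at key
  rw [star_trivial, sub_mulVec, dotProduct_sub, dotProduct_comm x (Y *ᵥ x)]
  exact sub_nonneg.2 key

/-- **Inequality (5.9)**: if `X₁, X₂` are negative definite symmetric matrices and a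
symmetric matrix `Y` satisfies
`⟨Yh,h⟩ ≥ (1−λ)⟨X₁h₁,h₁⟩ + λ⟨X₂h₂,h₂⟩` whenever `h = (1−λ)h₁ + λh₂`, then
`((1−λ)X₁⁻¹ + λX₂⁻¹)⁻¹ ≤ Y` in the Loewner order. -/
theorem hessian_harmonic_mean_le
    (n : ℕ) (hn : 1 ≤ n) (lam : ℝ) (hlam : lam ∈ Set.Ioo (0 : ℝ) 1)
    (X₁ X₂ Y : Matrix (Fin n) (Fin n) ℝ)
    (hX₁s : X₁.IsSymm) (hX₂s : X₂.IsSymm) (hYs : Y.IsSymm)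
    (hX₁ : (-X₁).PosDef) (hX₂ : (-X₂).PosDef)
    (hineq : ∀ h h₁ h₂ : Fin n → ℝ, h = (1 - lam) • h₁ + lam • h₂ →
      (1 - lam) * (X₁.mulVec h₁ ⬝ᵥ h₁) + lam * (X₂.mulVec h₂ ⬝ᵥ h₂) ≤
        Y.mulVec h ⬝ᵥ h) :
    (Y - ((1 - lam) • X₁⁻¹ + lam • X₂⁻¹)⁻¹).PosSemidef :=
  hessian_harmonic_mean_le_general n lam hlam X₁ X₂ Y hYs hX₁ hX₂ hineq
end
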